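/- arXiv:1905.10503 — 7 statements merged into one kernel-verified Lean document; each statement's English description precedes it below -/
import Mathlib

section
/- Let the sequence c be defined by c_1=3, c_2=5, c_3=7, c_4=23 and for i ≥ 1: c_{4i+1}=4c_{4i}-c_{4i-1}, c_{4i+2}=2c_{4i+1}-c_{4i}, c_{4i+3}=2c_{4i+2}-c_{4i+1}, c_{4i+4}=4c_{4i+3}-c_{4i+2}. Then for all i ≥ 2, c_{4i+1} = 30 c_{4(i-1)+1} - c_{4(i-2)+1}. -/
theorem stmt_0 (c : ℕ → ℤ)
    (h1 : c 1 = 3) (h2 : c 2 = 5) (h3 : c 3 = 7) (h4 : c 4 = 23)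
    (hr1 : ∀ i : ℕ, 1 ≤ i → c (4*i+1) = 4 * c (4*i) - c (4*i-1))
    (hr2 : ∀ i : ℕ, 1 ≤ i → c (4*i+2) = 2 * c (4*i+1) - c (4*i))
    (hr3 : ∀ i : ℕ, 1 ≤ i → c (4*i+3) = 2 * c (4*i+2) - c (4*i+1))
    (hr4 : ∀ i : ℕ, 1 ≤ i → c (4*i+4) = 4 * c (4*i+3) - c (4*i+2)) :
    ∀ i : ℕ, 2 ≤ i → c (4*i+1) = 30 * c (4*(i-1)+1) - c (4*(i-2)+1) := by
  have step : ∀ k : ℕ, 1 ≤ k →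
      c (4*(k+1)+1) = 37 * c (4*k+1) - 26 * c (4*k) ∧
      c (4*(k+1)) = 10 * c (4*k+1) - 7 * c (4*k) := by
    intro k hk
    have h1' := hr1 (k+1) (by omega)
    have h2' := hr2 k hk
    have h3' := hr3 k hk
    have h4' := hr4 k hk
    have e1 : 4*(k+1) = 4*k+4 := by ring
    have e2 : 4*k+4-1 = 4*k+3 := by omega
    rw [e1, e2] at h1'
    rw [e1]
    constructor <;> linarith
  have inv : ∀ k : ℕ, 1 ≤ k →
      7 * c (4*(k+1)+1) - 26 * c (4*(k+1)) + c (4*k+1) = 0 := by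
    intro k hk
    rcases Nat.lt_or_ge k 2 with hk2 | hk2
    · -- k = 1
      interval_cases k
      have a1 := hr1 1 le_rfl
      have a2 := hr2 1 le_rfl
      have a3 := hr3 1 le_rfl
      have a4 := hr4 1 le_rfl
      have a5 := hr1 2 (by omega)
      norm_num at a1 a2 a3 a4 a5 ⊢
      linarith
    · -- k ≥ 2, k = m+1 with m ≥ 1
      obtain ⟨m, rfl⟩ : ∃ m, k = m + 1 := ⟨k - 1, by omega⟩
      obtain ⟨s1, s2⟩ := step (m+1) (by omega)
      linarith
  intro i hi
  rcases Nat.lt_or_ge i 3 with hi3 | hi3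
  · -- i = 2
    interval_cases i
    have a1 := hr1 1 le_rfl
    have a2 := hr2 1 le_rfl
    have a3 := hr3 1 le_rfl
    have a4 := hr4 1 le_rfl
    have a5 := hr1 2 (by omega)
    norm_num at a1 a2 a3 a4 a5 ⊢
    linarith
  · obtain ⟨m, rfl⟩ : ∃ m, i = m + 3 := ⟨i - 3, by omega⟩
    have e1 : m + 3 - 1 = m + 2 := by omega
    have e2 : m + 3 - 2 = m + 1 := by omega
    rw [e1, e2]
    obtain ⟨s1, _⟩ := step (m+2) (by omega)
    have hinv := inv (m+1) (by omega)
    have e3 : 4*(m+3) = 4*(m+2+1) := by ring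
    have e4 : 4*(m+1+1) = 4*(m+2) := by ring
    rw [e3]
    rw [e4] at hinv
    linarith
end

section
/- Let A = 15+4√14, B = 15-4√14. For i ≥ 0 define c_{4i+1} = ((10+3√14)A^i-(10-3√14)B^i)/(2√14) and e_{4i+3} = ((71+19√14)A^i-(71-19√14)B^i)/(2√14). Then for every n ≥ 1, the sum D_2 = Σ_{k=0}^{n-1} c_{4k+1} · e_{4(n-k-1)+3} equals (n/56)·[(1508+403√14)A^{n-1} + (1508-403√14)B^{n-1}] + (11√14/392)·(A^n - B^n). -/
/-!
Both sequences are in Binet form `(a A^k - a' B^k) / (2√14)`. In the convolution the diagonal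
products `A^k A^(n-1-k) = A^(n-1)` do not depend on `k` and give the term linear in `n`, with
`(10 ± 3√14)(71 ± 19√14) = 1508 ± 403√14`; the cross terms `A^k B^(n-1-k)` sum to
`(A^n - B^n) / (A - B)` with `A - B = 8√14`.
-/

open Finset

theorem sum_range_binet_mul_binet {R : Type*} [CommRing R] (a a' b b' x y : R) (n : ℕ) :
    (∑ k ∈ range n, (a * x ^ k - a' * y ^ k) * (b * x ^ (n - 1 - k) - b' * y ^ (n - 1 - k)))
        * (x - y) =
      n * (x - y) * (a * b * x ^ (n - 1) + a' * b' * y ^ (n - 1))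
        - (a * b' + a' * b) * (x ^ n - y ^ n) := by
  have hexpand : ∀ k ∈ range n,
      (a * x ^ k - a' * y ^ k) * (b * x ^ (n - 1 - k) - b' * y ^ (n - 1 - k)) =
        (a * b * x ^ (n - 1) + a' * b' * y ^ (n - 1))
          - a * b' * (x ^ k * y ^ (n - 1 - k)) - a' * b * (y ^ k * x ^ (n - 1 - k)) := by
    intro k hk
    have hkn : n - 1 = k + (n - 1 - k) := by have := mem_range.mp hk; omega
    generalize n - 1 - k = m at hkn ⊢
    rw [hkn, pow_add, pow_add]
    ring
  have hswap :
      ∑ k ∈ range n, y ^ k * x ^ (n - 1 - k) = ∑ k ∈ range n, x ^ k * y ^ (n - 1 - k) := by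
    rw [← sum_range_reflect]
    refine sum_congr rfl fun k hk => ?_
    have := mem_range.mp hk
    rw [mul_comm]; congr 2; omega
  rw [sum_congr rfl hexpand, sum_sub_distrib, sum_sub_distrib, sum_const, card_range,
    ← mul_sum, ← mul_sum, hswap, nsmul_eq_mul]
  linear_combination (-(a * b' + a' * b)) * geom_sum₂_mul x y n

theorem stmt_6
    (c1 e3 : ℕ → ℝ)
    (hc1 : ∀ i : ℕ, c1 i =
      ((10 + 3 * Real.sqrt 14) * (15 + 4 * Real.sqrt 14) ^ i
        - (10 - 3 * Real.sqrt 14) * (15 - 4 * Real.sqrt 14) ^ i)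
      / (2 * Real.sqrt 14))
    (he3 : ∀ i : ℕ, e3 i =
      ((71 + 19 * Real.sqrt 14) * (15 + 4 * Real.sqrt 14) ^ i
        - (71 - 19 * Real.sqrt 14) * (15 - 4 * Real.sqrt 14) ^ i)
      / (2 * Real.sqrt 14)) :
    ∀ n : ℕ, 1 ≤ n →
      ∑ k ∈ Finset.range n, c1 k * e3 (n - k - 1) =
        (n / 56 : ℝ) * ((1508 + 403 * Real.sqrt 14) * (15 + 4 * Real.sqrt 14) ^ (n-1)
          + (1508 - 403 * Real.sqrt 14) * (15 - 4 * Real.sqrt 14) ^ (n-1))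
        + (11 * Real.sqrt 14 / 392) *
            ((15 + 4 * Real.sqrt 14) ^ n - (15 - 4 * Real.sqrt 14) ^ n) := by
  intro n _
  have hs : Real.sqrt 14 * Real.sqrt 14 = 14 := Real.mul_self_sqrt (by norm_num)
  have hs0 : Real.sqrt 14 ≠ 0 := by positivity
  set s := Real.sqrt 14
  set A : ℝ := 15 + 4 * s
  set B : ℝ := 15 - 4 * s
  have hterm : ∀ k, c1 k * e3 (n - k - 1) =
      ((10 + 3 * s) * A ^ k - (10 - 3 * s) * B ^ k)
        * ((71 + 19 * s) * A ^ (n - 1 - k) - (71 - 19 * s) * B ^ (n - 1 - k)) / 56 := by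
    intro k
    rw [hc1, he3, Nat.sub_right_comm, div_mul_div_comm, mul_mul_mul_comm, hs]
    norm_num
  rw [sum_congr rfl fun k _ => hterm k, ← sum_div]
  have hconv := sum_range_binet_mul_binet (10 + 3 * s) (10 - 3 * s) (71 + 19 * s) (71 - 19 * s)
    A B n
  rw [show A - B = 8 * s by ring,
    show (10 + 3 * s) * (71 + 19 * s) = 1508 + 403 * s by linear_combination 57 * hs,
    show (10 - 3 * s) * (71 - 19 * s) = 1508 - 403 * s by linear_combination 57 * hs,
    show (10 + 3 * s) * (71 - 19 * s) + (10 - 3 * s) * (71 + 19 * s) = -176 by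
      linear_combination -114 * hs] at hconv
  set S := ∑ k ∈ range n, ((10 + 3 * s) * A ^ k - (10 - 3 * s) * B ^ k)
    * ((71 + 19 * s) * A ^ (n - 1 - k) - (71 - 19 * s) * B ^ (n - 1 - k))
  have hS : S = n * ((1508 + 403 * s) * A ^ (n - 1) + (1508 - 403 * s) * B ^ (n - 1))
      + 11 * s / 7 * (A ^ n - B ^ n) := by
    refine mul_right_cancel₀ (mul_ne_zero (by norm_num) hs0 : 8 * s ≠ 0) ?_
    linear_combination hconv - 88 / 7 * (A ^ n - B ^ n) * hs
  rw [hS]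
  ring
end

section
/- Let A = 15+4√14, B = 15-4√14. For i ≥ 0 define c_{4i+2} = ((18+5√14)A^i-(18-5√14)B^i)/(2√14) and e_{4i+2} = ((41+11√14)A^i-(41-11√14)B^i)/(2√14). Then for every n ≥ 1, Σ_{k=0}^{n-1} c_{4k+2} · e_{4(n-k-1)+2} = (n/56)·[(1508+403√14)A^{n-1} + (1508-403√14)B^{n-1}] + (4√14/392)·(A^n - B^n). -/
/-! Both sequences have Binet form `a A^k + b B^k`. In the convolution of two such sequences the
products `A^k A^(n-1-k)` and `B^k B^(n-1-k)` do not depend on `k` and give the term linear in `n`,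
while both mixed products sum to the homogeneous geometric sum
`∑ A^k B^(n-1-k) = (A^n - B^n) / (A - B)`, with `A - B = 8√14`. -/

open Finset

theorem sum_range_pow_add_pow_mul_pow_add_pow {R : Type*} [CommRing R] (a b c d x y : R) (n : ℕ) :
    ∑ k ∈ range n, (a * x ^ k + b * y ^ k) * (c * x ^ (n - 1 - k) + d * y ^ (n - 1 - k)) =
      n * (a * c * x ^ (n - 1) + b * d * y ^ (n - 1)) +
        (a * d + b * c) * ∑ k ∈ range n, x ^ k * y ^ (n - 1 - k) := by
  have hterm : ∀ k ∈ range n,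
      (a * x ^ k + b * y ^ k) * (c * x ^ (n - 1 - k) + d * y ^ (n - 1 - k)) =
        (a * c * x ^ (n - 1) + b * d * y ^ (n - 1)) +
          (a * d * (x ^ k * y ^ (n - 1 - k)) + b * c * (y ^ k * x ^ (n - 1 - k))) := by
    intro k hk
    have hsplit : n - 1 = k + (n - 1 - k) := by grind
    rw [hsplit, pow_add, pow_add, ← hsplit]
    ring
  rw [sum_congr rfl hterm, sum_add_distrib, sum_const, card_range, nsmul_eq_mul, sum_add_distrib,
    ← mul_sum, ← mul_sum, ← geom_sum₂_comm y x]
  ring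

theorem stmt_7
    (c2 e2 : ℕ → ℝ)
    (hc2 : ∀ i : ℕ, c2 i =
      ((18 + 5 * Real.sqrt 14) * (15 + 4 * Real.sqrt 14) ^ i
        - (18 - 5 * Real.sqrt 14) * (15 - 4 * Real.sqrt 14) ^ i)
      / (2 * Real.sqrt 14))
    (he2 : ∀ i : ℕ, e2 i =
      ((41 + 11 * Real.sqrt 14) * (15 + 4 * Real.sqrt 14) ^ i
        - (41 - 11 * Real.sqrt 14) * (15 - 4 * Real.sqrt 14) ^ i)
      / (2 * Real.sqrt 14)) :
    ∀ n : ℕ, 1 ≤ n →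
      ∑ k ∈ Finset.range n, c2 k * e2 (n - k - 1) =
        (n / 56 : ℝ) * ((1508 + 403 * Real.sqrt 14) * (15 + 4 * Real.sqrt 14) ^ (n-1)
          + (1508 - 403 * Real.sqrt 14) * (15 - 4 * Real.sqrt 14) ^ (n-1))
        + (4 * Real.sqrt 14 / 392) *
            ((15 + 4 * Real.sqrt 14) ^ n - (15 - 4 * Real.sqrt 14) ^ n) := by
  intro n _
  set s := Real.sqrt 14
  have hs2 : s ^ 2 = 14 := Real.sq_sqrt (by norm_num)
  have hs : s ≠ 0 := by positivity
  have hAB : 15 + 4 * s ≠ 15 - 4 * s := by intro h; apply hs; linarith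
  have hbinet : ∀ (p q : ℝ) (i : ℕ), (p * (15 + 4 * s) ^ i - q * (15 - 4 * s) ^ i) / (2 * s) =
      p / (2 * s) * (15 + 4 * s) ^ i + -q / (2 * s) * (15 - 4 * s) ^ i := fun _ _ _ => by ring
  simp only [hc2, he2, hbinet, Nat.sub_right_comm n _ 1]
  rw [sum_range_pow_add_pow_mul_pow_add_pow, (Commute.all _ _).geom_sum₂ hAB]
  have hac : (18 + 5 * s) / (2 * s) * ((41 + 11 * s) / (2 * s)) = (1508 + 403 * s) / 56 := by
    field_simp
    linear_combination (-2952 - 1612 * s) * hs2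
  have hbd : -(18 - 5 * s) / (2 * s) * (-(41 - 11 * s) / (2 * s)) = (1508 - 403 * s) / 56 := by
    field_simp
    linear_combination (-2952 + 1612 * s) * hs2
  have had : (18 + 5 * s) / (2 * s) * (-(41 - 11 * s) / (2 * s)) +
      -(18 - 5 * s) / (2 * s) * ((41 + 11 * s) / (2 * s)) = 8 / 7 := by
    field_simp
    linear_combination 738 * hs2
  have hmixed : ∀ X : ℝ, 8 / 7 * (X / ((15 + 4 * s) - (15 - 4 * s))) = 4 * s / 392 * X := by
    intro X
    field_simp
    linear_combination -224 * X * hs2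
  rw [hac, hbd, had, hmixed]
  ring
end

section
/- Let A = 15+4√14, B = 15-4√14. For i ≥ 0 define c_{4i+3} = ((26+7√14)A^i-(26-7√14)B^i)/(2√14) and e_{4i+1} = ((11+3√14)A^i-(11-3√14)B^i)/(2√14). Then for every n ≥ 1, Σ_{k=0}^{n-1} c_{4k+3} · e_{4(n-k-1)+1} = (n/56)·[(580+155√14)A^{n-1} + (580-155√14)B^{n-1}] + (√14/392)·(A^n - B^n). -/
/-!
Both sequences have the form `p A^k + q B^k`. In the convolution of two such sequences every
diagonal term equals `p r A^n + q t B^n`, and the cross terms add up to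
`(p t + q r) ∑ A^k B^(n-k) = (p t + q r) (A^(n+1) - B^(n+1)) / (A - B)`. Here
`p r, q t = (580 ± 155√14) / 56`, `p t + q r = 2 / 7` and `A - B = 8√14`.
-/

open Finset

section PowComb

variable {R : Type*} [CommRing R]

def powComb (p q A B : R) (k : ℕ) : R := p * A ^ k + q * B ^ k

lemma sum_range_succ_pow_mul_pow_sub_comm (A B : R) (n : ℕ) :
    ∑ k ∈ range (n + 1), B ^ k * A ^ (n - k) = ∑ k ∈ range (n + 1), A ^ k * B ^ (n - k) := by
  rw [← sum_range_reflect]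
  refine sum_congr rfl fun k hk => ?_
  have hk : k ≤ n := Nat.lt_succ_iff.mp (mem_range.mp hk)
  rw [mul_comm, Nat.add_sub_cancel, Nat.sub_sub_self hk]

lemma sum_range_succ_powComb_mul_powComb (p q r t A B : R) (n : ℕ) :
    ∑ k ∈ range (n + 1), powComb p q A B k * powComb r t A B (n - k) =
      (n + 1) * (p * r * A ^ n + q * t * B ^ n)
        + (p * t + q * r) * ∑ k ∈ range (n + 1), A ^ k * B ^ (n - k) := by
  have hterm : ∀ k ∈ range (n + 1), powComb p q A B k * powComb r t A B (n - k) =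
      (p * r * A ^ n + q * t * B ^ n) + p * t * (A ^ k * B ^ (n - k))
        + q * r * (B ^ k * A ^ (n - k)) := by
    intro k hk
    have hsplit : ∀ X : R, X ^ n = X ^ k * X ^ (n - k) := fun X => by
      rw [← pow_add, Nat.add_sub_cancel' (Nat.lt_succ_iff.mp (mem_range.mp hk))]
    rw [powComb, powComb, hsplit A, hsplit B]
    ring
  rw [sum_congr rfl hterm, sum_add_distrib, sum_add_distrib, sum_const, card_range, nsmul_eq_mul,
    ← mul_sum, ← mul_sum, sum_range_succ_pow_mul_pow_sub_comm]
  push_cast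
  ring

lemma sum_range_succ_powComb_mul_powComb_of_ne {K : Type*} [Field K] {A B : K} (hAB : A ≠ B)
    (p q r t : K) (n : ℕ) :
    ∑ k ∈ range (n + 1), powComb p q A B k * powComb r t A B (n - k) =
      (n + 1) * (p * r * A ^ n + q * t * B ^ n)
        + (p * t + q * r) * (A ^ (n + 1) - B ^ (n + 1)) / (A - B) := by
  have hgeom := geom_sum₂_mul A B (n + 1)
  rw [Nat.add_sub_cancel] at hgeom
  rw [sum_range_succ_powComb_mul_powComb, ← hgeom, mul_div_assoc,
    mul_div_cancel_right₀ _ (sub_ne_zero.mpr hAB)]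

end PowComb

theorem stmt_8
    (c3 e1 : ℕ → ℝ)
    (hc3 : ∀ i : ℕ, c3 i =
      ((26 + 7 * Real.sqrt 14) * (15 + 4 * Real.sqrt 14) ^ i
        - (26 - 7 * Real.sqrt 14) * (15 - 4 * Real.sqrt 14) ^ i)
      / (2 * Real.sqrt 14))
    (he1 : ∀ i : ℕ, e1 i =
      ((11 + 3 * Real.sqrt 14) * (15 + 4 * Real.sqrt 14) ^ i
        - (11 - 3 * Real.sqrt 14) * (15 - 4 * Real.sqrt 14) ^ i)
      / (2 * Real.sqrt 14)) :
    ∀ n : ℕ, 1 ≤ n →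
      ∑ k ∈ Finset.range n, c3 k * e1 (n - k - 1) =
        (n / 56 : ℝ) * ((580 + 155 * Real.sqrt 14) * (15 + 4 * Real.sqrt 14) ^ (n-1)
          + (580 - 155 * Real.sqrt 14) * (15 - 4 * Real.sqrt 14) ^ (n-1))
        + (Real.sqrt 14 / 392) *
            ((15 + 4 * Real.sqrt 14) ^ n - (15 - 4 * Real.sqrt 14) ^ n) := by
  intro n hn
  obtain ⟨m, rfl⟩ : ∃ m, n = m + 1 := ⟨n - 1, (Nat.succ_pred_eq_of_pos hn).symm⟩
  set s := Real.sqrt 14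
  have hs : s * s = 14 := Real.mul_self_sqrt (by norm_num)
  have hs_pos : 0 < s := Real.sqrt_pos.mpr (by norm_num)
  have hc : ∀ i, c3 i = powComb ((26 + 7 * s) / (2 * s)) (-(26 - 7 * s) / (2 * s))
      (15 + 4 * s) (15 - 4 * s) i := fun i => by rw [hc3, powComb]; ring
  have he : ∀ i, e1 i = powComb ((11 + 3 * s) / (2 * s)) (-(11 - 3 * s) / (2 * s))
      (15 + 4 * s) (15 - 4 * s) i := fun i => by rw [he1, powComb]; ring
  have hAB : (15 + 4 * s) - (15 - 4 * s) = 8 * s := by ring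
  have h4s : 2 * s * (2 * s) = 56 := by linear_combination 4 * hs
  have hpr : (26 + 7 * s) / (2 * s) * ((11 + 3 * s) / (2 * s)) = (580 + 155 * s) / 56 := by
    rw [div_mul_div_comm, h4s]; linear_combination 3 / 8 * hs
  have hqt : -(26 - 7 * s) / (2 * s) * (-(11 - 3 * s) / (2 * s)) = (580 - 155 * s) / 56 := by
    rw [div_mul_div_comm, h4s]; linear_combination 3 / 8 * hs
  have hcross : (26 + 7 * s) / (2 * s) * (-(11 - 3 * s) / (2 * s))
      + -(26 - 7 * s) / (2 * s) * ((11 + 3 * s) / (2 * s)) = 2 / 7 := by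
    rw [div_mul_div_comm, div_mul_div_comm, h4s]; linear_combination 3 / 4 * hs
  have hquot : ∀ X : ℝ, 2 / 7 * X / (8 * s) = s / 392 * X := fun X => by
    rw [div_eq_iff (by positivity)]; linear_combination -X / 49 * hs
  simp only [hc, he, Nat.add_sub_cancel, Nat.sub_right_comm _ _ 1]
  rw [sum_range_succ_powComb_mul_powComb_of_ne (by linarith), hpr, hqt, hcross, hAB, hquot]
  push_cast
  ring
end

section
/- Let A = 15+4√14 and B = 15-4√14. For every natural number n, the quantity (1/196)·[(98+33√14)A^n + (98-33√14)B^n] + (9n/14)·[(4+√14)A^n + (4-√14)B^n] is a positive integer (i.e., it equals an integer, and is positive). -/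
/-!
With `u = 15 + 4√14 ∈ ℤ[√14]` and `uⁿ = x + y√14`, the conjugate `15 - 4√14` has `n`-th power
`x - y√14`, and the quantity collapses to `x + 18ny + (33y + 36nx)/7`. Since `√14` is nilpotent
modulo 7, `uⁿ ≡ 1 + 4n√14`, i.e. `x ≡ 1` and `y ≡ 4n (mod 7)`, so `33y + 36nx ≡ 21n ≡ 0`.
Positivity follows from `x ≥ 1`, `y ≥ 0`.
-/

namespace Zsqrtd

variable {d : ℤ}

theorem one_le_re_pow_and_im_pow_nonneg (hd : 0 ≤ d) {z : ℤ√d} (hre : 1 ≤ z.re) (him : 0 ≤ z.im)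
    (n : ℕ) : 1 ≤ (z ^ n).re ∧ 0 ≤ (z ^ n).im := by
  induction n with
  | zero => simp
  | succ n ih =>
    obtain ⟨hre_n, him_n⟩ := ih
    rw [pow_succ, re_mul, im_mul]
    constructor <;> nlinarith [mul_nonneg (mul_nonneg hd him_n) him]

-- `√d` squares to `0` modulo `m`, so `(1 + b√d) ^ n ≡ 1 + n b √d`.
theorem pow_modEq_of_dvd {m : ℤ} (hd : m ∣ d) {z : ℤ√d} (hre : z.re ≡ 1 [ZMOD m]) (n : ℕ) :
    (z ^ n).re ≡ 1 [ZMOD m] ∧ (z ^ n).im ≡ n * z.im [ZMOD m] := by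
  have hd0 : d ≡ 0 [ZMOD m] := Int.modEq_zero_iff_dvd.mpr hd
  induction n with
  | zero => simp [Int.ModEq.refl]
  | succ n ih =>
    obtain ⟨hre_n, him_n⟩ := ih
    rw [pow_succ, re_mul, im_mul]
    constructor
    · calc (z ^ n).re * z.re + d * (z ^ n).im * z.im
          ≡ 1 * 1 + 0 * (z ^ n).im * z.im [ZMOD m] := by gcongr
        _ = 1 := by ring
    · calc (z ^ n).re * z.im + (z ^ n).im * z.re
          ≡ 1 * z.im + n * z.im * 1 [ZMOD m] := by gcongr
        _ = (n + 1 : ℕ) * z.im := by push_cast; ring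

variable {R : Type*} [CommRing R]

theorem lift_pow (r : {r : R // r * r = d}) (z : ℤ√d) (n : ℕ) :
    ((z.re : R) + z.im * r) ^ n = (z ^ n).re + (z ^ n).im * r := by
  simpa using (map_pow (lift r) z n).symm

theorem lift_star_pow (r : {r : R // r * r = d}) (z : ℤ√d) (n : ℕ) :
    ((z.re : R) - z.im * r) ^ n = (z ^ n).re - (z ^ n).im * r := by
  simpa [← star_pow, sub_eq_add_neg] using lift_pow r (star z) n

end Zsqrtd

theorem sqrt14_combination_eq {s x y : ℝ} (hs : s * s = 14) (n : ℝ) :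
    (1/196 : ℝ) * ((98 + 33 * s) * (x + y * s) + (98 - 33 * s) * (x - y * s))
      + (9 * n / 14 : ℝ) * ((4 + s) * (x + y * s) + (4 - s) * (x - y * s))
      = x + 18 * n * y + (33 * y + 36 * n * x) / 7 := by
  linear_combination (33 / 98 * y + 9 / 7 * n * y) * hs

theorem stmt_16 :
    ∀ n : ℕ, ∃ k : ℤ, 0 < k ∧
      (1/196 : ℝ) * ((98 + 33 * Real.sqrt 14) * (15 + 4 * Real.sqrt 14) ^ n
        + (98 - 33 * Real.sqrt 14) * (15 - 4 * Real.sqrt 14) ^ n)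
      + (9 * n / 14 : ℝ) * ((4 + Real.sqrt 14) * (15 + 4 * Real.sqrt 14) ^ n
        + (4 - Real.sqrt 14) * (15 - 4 * Real.sqrt 14) ^ n) = (k : ℝ) := by
  intro n
  let u : ℤ√14 := ⟨15, 4⟩
  have hs : √14 * √14 = 14 := Real.mul_self_sqrt (by norm_num)
  let s : {r : ℝ // r * r = (14 : ℤ)} := ⟨√14, by exact_mod_cast hs⟩
  obtain ⟨hx, hy⟩ :=
    Zsqrtd.one_le_re_pow_and_im_pow_nonneg (z := u) (by norm_num) (by norm_num) (by norm_num) n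
  obtain ⟨hx7, hy7⟩ := Zsqrtd.pow_modEq_of_dvd (z := u) (m := 7) (by norm_num) rfl n
  obtain ⟨c, hc⟩ : (7 : ℤ) ∣ 33 * (u ^ n).im + 36 * n * (u ^ n).re :=
    Int.modEq_zero_iff_dvd.mp <| calc
      33 * (u ^ n).im + 36 * n * (u ^ n).re ≡ 33 * (n * 4) + 36 * n * 1 [ZMOD 7] := by gcongr
      _ = 7 * (24 * n) := by ring
      _ ≡ 0 [ZMOD 7] := Int.modEq_zero_iff_dvd.mpr (dvd_mul_right _ _)
  refine ⟨(u ^ n).re + 18 * n * (u ^ n).im + c, by nlinarith, ?_⟩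
  have hA : (15 + 4 * √14 : ℝ) ^ n = (u ^ n).re + (u ^ n).im * √14 := by
    simpa [s, u] using Zsqrtd.lift_pow s u n
  have hB : (15 - 4 * √14 : ℝ) ^ n = (u ^ n).re - (u ^ n).im * √14 := by
    simpa [s, u] using Zsqrtd.lift_star_pow s u n
  rw [hA, hB, sqrt14_combination_eq hs]
  have hcR : (33 * (u ^ n).im + 36 * n * (u ^ n).re : ℝ) = 7 * c := by exact_mod_cast hc
  push_cast
  linear_combination hcR / 7
end

section
/- Let A = 15+4√14 and B = 15-4√14. For every integer n ≥ 1, the quantity ((116+31√14)A^{n-1} - (116-31√14)B^{n-1})/√14 is a positive integer, and for n = 1, 2, 3 it equals 62, 1858, 55678 respectively. -/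
/-! The two terms are `c A ^ n` and `c' B ^ n` with `A`, `B` the roots of `x² - 30x + 1`, so the
quantity satisfies `u (n + 2) = 30 u (n + 1) - u n`. It therefore agrees with the integer sequence
with that recurrence and initial values `62, 1858`, which is positive because it is increasing. -/

def secondOrderSeq (p a b : ℤ) : ℕ → ℤ
  | 0 => a
  | 1 => b
  | n + 2 => p * secondOrderSeq p a b (n + 1) - secondOrderSeq p a b n

namespace secondOrderSeq

variable {p a b : ℤ}

theorem pos_and_lt_succ (hp : 2 ≤ p) (ha : 0 < a) (hab : a < b) :
    ∀ n, 0 < secondOrderSeq p a b n ∧ secondOrderSeq p a b n < secondOrderSeq p a b (n + 1)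
  | 0 => ⟨ha, hab⟩
  | n + 1 => by
    obtain ⟨hpos, hlt⟩ := pos_and_lt_succ hp ha hab n
    have hstep : secondOrderSeq p a b (n + 2) =
        p * secondOrderSeq p a b (n + 1) - secondOrderSeq p a b n := rfl
    constructor <;> nlinarith

theorem pos (hp : 2 ≤ p) (ha : 0 < a) (hab : a < b) (n : ℕ) : 0 < secondOrderSeq p a b n :=
  (pos_and_lt_succ hp ha hab n).1

theorem cast_eq {R : Type*} [CommRing R] {f : ℕ → R} (h0 : f 0 = a) (h1 : f 1 = b)
    (hf : ∀ n, f (n + 2) = p * f (n + 1) - f n) : ∀ n, (secondOrderSeq p a b n : R) = f n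
  | 0 => by simp [secondOrderSeq, h0]
  | 1 => by simp [secondOrderSeq, h1]
  | n + 2 => by
    rw [hf, ← cast_eq h0 h1 hf n, ← cast_eq h0 h1 hf (n + 1)]
    push_cast [secondOrderSeq]
    ring

end secondOrderSeq

theorem pow_add_two_of_sq_eq {R : Type*} [CommRing R] {x p : R} (hx : x ^ 2 = p * x - 1) (n : ℕ) :
    x ^ (n + 2) = p * x ^ (n + 1) - x ^ n := by
  linear_combination x ^ n * hx

theorem cast_secondOrderSeq_eq_binet (n : ℕ) : (secondOrderSeq 30 62 1858 n : ℝ) =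
    ((116 + 31 * √14) * (15 + 4 * √14) ^ n - (116 - 31 * √14) * (15 - 4 * √14) ^ n) / √14 := by
  have hs : √14 ^ 2 = 14 := Real.sq_sqrt (by norm_num)
  have hA := pow_add_two_of_sq_eq (p := (30 : ℝ)) (x := 15 + 4 * √14)
    (by linear_combination 16 * hs)
  have hB := pow_add_two_of_sq_eq (p := (30 : ℝ)) (x := 15 - 4 * √14)
    (by linear_combination 16 * hs)
  revert n
  refine secondOrderSeq.cast_eq ?_ ?_ fun n => ?_
  · field_simp
    ring
  · field_simp
    ring
  · rw [hA, hB]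
    push_cast
    ring

theorem stmt_17
    (d : ℕ → ℝ)
    (hd : ∀ n : ℕ, d n =
      ((116 + 31 * Real.sqrt 14) * (15 + 4 * Real.sqrt 14) ^ (n-1)
        - (116 - 31 * Real.sqrt 14) * (15 - 4 * Real.sqrt 14) ^ (n-1))
      / Real.sqrt 14) :
    (∀ n : ℕ, 1 ≤ n → ∃ k : ℤ, 0 < k ∧ d n = (k : ℝ)) ∧
    d 1 = 62 ∧ d 2 = 1858 ∧ d 3 = 55678 := by
  have hd_succ (m : ℕ) : d (m + 1) = secondOrderSeq 30 62 1858 m := by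
    rw [hd, Nat.add_sub_cancel, ← cast_secondOrderSeq_eq_binet]
  refine ⟨fun n hn => ?_, by simpa [secondOrderSeq] using hd_succ 0,
    by simpa [secondOrderSeq] using hd_succ 1, ?_⟩
  · obtain ⟨m, rfl⟩ := Nat.exists_eq_add_of_le' hn
    exact ⟨_, secondOrderSeq.pos (by norm_num) (by norm_num) (by norm_num) m, hd_succ m⟩
  · rw [hd_succ 2]
    norm_num [secondOrderSeq]
end

section
/- Let the sequence e be defined by e_1=3, e_2=11, e_3=19, e_4=27 and for i ≥ 1: e_{4i+1}=4e_{4i}-e_{4i-1}, e_{4i+2}=4e_{4i+1}-e_{4i}, e_{4i+3}=2e_{4i+2}-e_{4i+1}, e_{4i+4}=2e_{4i+3}-e_{4i+2}. Then e_5=89, e_6=329, e_7=569, e_8=809, and for all i ≥ 2, e_{4i+4} = 30·e_{4(i-1)+4} - e_{4(i-2)+4}. -/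
/-!
Writing `a = e (4i-1)` and `b = e (4i)`, one block of four recurrence steps maps `(a, b)` linearly
to `(e (4i+3), e (4i+4)) = (-7a + 26b, -10a + 37b)`. This block matrix has trace `30` and
determinant `1`, so by Cayley–Hamilton each coordinate of its orbit satisfies
`x_{n+2} = 30 x_{n+1} - x_n`.
-/

/-- Cayley–Hamilton for `!![p, q; r, s]`, on the second coordinate of an orbit
`(a, b) ↦ (a', b') ↦ (_, b'')`. -/
theorem snd_orbit_eq_trace_mul_sub_det_mul {R : Type*} [CommRing R]
    {p q r s a b a' b' b'' : R}
    (ha' : a' = p * a + q * b) (hb' : b' = r * a + s * b)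
    (hb'' : b'' = r * a' + s * b') :
    b'' = (p + s) * b' - (p * s - q * r) * b := by
  subst ha' hb' hb''
  ring

section BlockStep

variable {e : ℕ → ℤ}
    (hr1 : ∀ i : ℕ, 1 ≤ i → e (4*i+1) = 4 * e (4*i) - e (4*i-1))
    (hr2 : ∀ i : ℕ, 1 ≤ i → e (4*i+2) = 4 * e (4*i+1) - e (4*i))
    (hr3 : ∀ i : ℕ, 1 ≤ i → e (4*i+3) = 2 * e (4*i+2) - e (4*i+1))
    (hr4 : ∀ i : ℕ, 1 ≤ i → e (4*i+4) = 2 * e (4*i+3) - e (4*i+2))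
include hr1 hr2 hr3 hr4

theorem block_step (i : ℕ) (hi : 1 ≤ i) :
    e (4*i+1) = -e (4*i-1) + 4 * e (4*i) ∧
    e (4*i+2) = -4 * e (4*i-1) + 15 * e (4*i) ∧
    e (4*i+3) = -7 * e (4*i-1) + 26 * e (4*i) ∧
    e (4*i+4) = -10 * e (4*i-1) + 37 * e (4*i) := by
  have h1 := hr1 i hi
  have h2 := hr2 i hi
  have h3 := hr3 i hi
  have h4 := hr4 i hi
  refine ⟨?_, ?_, ?_, ?_⟩ <;> linarith

end BlockStep

theorem stmt_18_general (e : ℕ → ℤ)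
    (h3 : e 3 = 19) (h4 : e 4 = 27)
    (hr1 : ∀ i : ℕ, 1 ≤ i → e (4*i+1) = 4 * e (4*i) - e (4*i-1))
    (hr2 : ∀ i : ℕ, 1 ≤ i → e (4*i+2) = 4 * e (4*i+1) - e (4*i))
    (hr3 : ∀ i : ℕ, 1 ≤ i → e (4*i+3) = 2 * e (4*i+2) - e (4*i+1))
    (hr4 : ∀ i : ℕ, 1 ≤ i → e (4*i+4) = 2 * e (4*i+3) - e (4*i+2)) :
    e 5 = 89 ∧ e 6 = 329 ∧ e 7 = 569 ∧ e 8 = 809 ∧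
    ∀ i : ℕ, 2 ≤ i → e (4*i+4) = 30 * e (4*(i-1)+4) - e (4*(i-2)+4) := by
  have step := block_step hr1 hr2 hr3 hr4
  obtain ⟨h5, h6, h7, h8⟩ := step 1 le_rfl
  norm_num [h3, h4] at h5 h6 h7 h8
  refine ⟨h5, h6, h7, h8, fun i hi => ?_⟩
  obtain ⟨j, rfl⟩ : ∃ j, i = j + 2 := ⟨i - 2, by omega⟩
  obtain ⟨-, -, ha', hb'⟩ := step (j + 1) (by omega)
  obtain ⟨-, -, -, hb''⟩ := step (j + 2) (by omega)
  rw [show 4 * (j + 1) + 4 = 4 * (j + 2) by omega] at hb'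
  rw [show 4 * (j + 2) - 1 = 4 * (j + 1) + 3 by omega] at hb''
  rw [show 4 * (j + 2 - 1) + 4 = 4 * (j + 2) by omega, show 4 * (j + 2 - 2) + 4 = 4 * (j + 1) by omega]
  linear_combination snd_orbit_eq_trace_mul_sub_det_mul ha' hb' hb''

theorem stmt_18 (e : ℕ → ℤ)
    (h1 : e 1 = 3) (h2 : e 2 = 11) (h3 : e 3 = 19) (h4 : e 4 = 27)
    (hr1 : ∀ i : ℕ, 1 ≤ i → e (4*i+1) = 4 * e (4*i) - e (4*i-1))
    (hr2 : ∀ i : ℕ, 1 ≤ i → e (4*i+2) = 4 * e (4*i+1) - e (4*i))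
    (hr3 : ∀ i : ℕ, 1 ≤ i → e (4*i+3) = 2 * e (4*i+2) - e (4*i+1))
    (hr4 : ∀ i : ℕ, 1 ≤ i → e (4*i+4) = 2 * e (4*i+3) - e (4*i+2)) :
    e 5 = 89 ∧ e 6 = 329 ∧ e 7 = 569 ∧ e 8 = 809 ∧
    ∀ i : ℕ, 2 ≤ i → e (4*i+4) = 30 * e (4*(i-1)+4) - e (4*(i-2)+4) :=
  stmt_18_general e h3 h4 hr1 hr2 hr3 hr4
end
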